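/- arXiv:1207.3606 — 2 statements merged into one kernel-verified Lean document; each statement's English description precedes it below -/
import Mathlib

section
/- A graph Γ with D = d satisfies p_i(A) = A_i if and only if both ω_i·ā_i^{(i)} = 1 and δ̄_i = p_i(λ0) hold, where ā_i^{(i)} = ⟨A^i, A_i⟩/δ̄_i is the average number of shortest i-paths between vertices at distance i. -/
/-
Write `P = p(A)` and `S = A_i`. Since the entries of `q(A)` vanish at distance `> deg q`,
`A_i` is orthogonal to every polynomial in `A` of degree `< i`, so only the leading term of
`p` pairs with `A_i`: `⟨P, S⟩ = ω_i ⟨A^i, S⟩ = ω_i ā_i^{(i)} δ̄_i`. As `S ≠ 0`, the two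
conditions say `⟨P, S⟩ = ⟨S, S⟩ = ⟨P, P⟩`, which is exactly `‖P - S‖² = 0`.
-/

open Matrix Polynomial Finset

/-- The distance-`i` matrix of a graph on `Fin n`. -/
noncomputable def distMatrix {n : ℕ} (G : SimpleGraph (Fin n)) (i : ℕ) :
    Matrix (Fin n) (Fin n) ℝ :=
  Matrix.of fun u v => if G.dist u v = i then 1 else 0

/-- The 0-1 matrix of pairs at distance at most `i` (`S_i`). -/
noncomputable def ballMatrix {n : ℕ} (G : SimpleGraph (Fin n)) (i : ℕ) :
    Matrix (Fin n) (Fin n) ℝ :=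
  Matrix.of fun u v => if G.dist u v ≤ i then 1 else 0

/-- The normalized trace inner product `⟨R,S⟩ = (1/n) tr (R S)`. -/
noncomputable def ip {n : ℕ} (R S : Matrix (Fin n) (Fin n) ℝ) : ℝ :=
  (1 / (n : ℝ)) * (R * S).trace

/-- Average crossed local multiplicity `m̄_{ij} = ⟨E_j, A_i⟩ / ‖A_i‖²`. -/
noncomputable def mbar {n : ℕ} (G : SimpleGraph (Fin n)) (E : Matrix (Fin n) (Fin n) ℝ)
    (i : ℕ) : ℝ :=
  ip E (distMatrix G i) / ip (distMatrix G i) (distMatrix G i)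

namespace SimpleGraph

variable {V : Type*} {G : SimpleGraph V}

lemma Connected.exists_dist_eq_of_le_diam (hconn : G.Connected) {i : ℕ} (hi : i ≤ G.diam) :
    ∃ u v, G.dist u v = i := by
  have := hconn.nonempty
  obtain ⟨u, v, huv⟩ := G.exists_dist_eq_diam
  obtain ⟨p, hp⟩ := hconn.exists_walk_length_eq_dist u v
  refine ⟨u, p.getVert i, le_antisymm ?_ ?_⟩
  · simpa [Walk.take_length, hp, huv, hi] using dist_le (p.take i)
  · have htri := hconn.dist_triangle (u := u) (v := p.getVert i) (w := v)
    have hdrop := dist_le (p.drop i)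
    rw [Walk.drop_length] at hdrop
    omega

variable [Fintype V] [DecidableEq V] [DecidableRel G.Adj] {R : Type*} [CommSemiring R]

lemma adjMatrix_pow_apply_eq_zero_of_lt_dist {u v : V} {j : ℕ} (h : j < G.dist u v) :
    (G.adjMatrix R ^ j) u v = 0 := by
  rw [adjMatrix_pow_apply_eq_card_walk, Fintype.card_eq_zero_iff.mpr, Nat.cast_zero]
  exact ⟨fun p => (h.trans_le (p.2 ▸ dist_le p.1)).false⟩

lemma aeval_adjMatrix_apply_eq_zero_of_degree_lt_dist {q : R[X]} {u v : V}
    (h : q.degree < G.dist u v) : aeval (G.adjMatrix R) q u v = 0 := by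
  rcases eq_or_ne q 0 with rfl | hq
  · simp
  rw [degree_eq_natDegree hq, Nat.cast_lt] at h
  rw [aeval_eq_sum_range, Matrix.sum_apply]
  refine sum_eq_zero fun j hj => ?_
  rw [Matrix.smul_apply, adjMatrix_pow_apply_eq_zero_of_lt_dist (by simp at hj; omega), smul_zero]

end SimpleGraph

lemma Matrix.IsSymm.aeval {V R : Type*} [Fintype V] [DecidableEq V] [CommSemiring R]
    {A : Matrix V V R} (hA : A.IsSymm) (p : R[X]) : (aeval A p).IsSymm := by
  rw [IsSymm, aeval_eq_sum_range, transpose_sum]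
  simp only [transpose_smul, transpose_pow, hA.eq]

section TraceInnerProduct

variable {n : ℕ}

lemma ip_eq_sum_mul_apply (M : Matrix (Fin n) (Fin n) ℝ) {S : Matrix (Fin n) (Fin n) ℝ}
    (hS : S.IsSymm) : ip M S = (1 / n) * ∑ u, ∑ v, M u v * S u v := by
  simp only [ip, trace, diag_apply, mul_apply, hS.apply]

lemma ip_self_eq_zero_iff {M : Matrix (Fin n) (Fin n) ℝ} (hM : M.IsSymm) :
    ip M M = 0 ↔ M = 0 := by
  rcases Nat.eq_zero_or_pos n with rfl | hn
  · simp [ip, Subsingleton.elim M 0]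
  rw [ip, mul_eq_zero, or_iff_right (by positivity), ← trace_conjTranspose_mul_self_eq_zero_iff,
    conjTranspose_eq_transpose_of_trivial, hM.eq]

lemma ip_self_pos {M : Matrix (Fin n) (Fin n) ℝ} (hM : M.IsSymm) (hM0 : M ≠ 0) :
    0 < ip M M := by
  refine lt_of_le_of_ne ?_ (Ne.symm ((ip_self_eq_zero_iff hM).not.mpr hM0))
  have := (posSemidef_conjTranspose_mul_self M).trace_nonneg
  rw [conjTranspose_eq_transpose_of_trivial, hM.eq] at this
  exact mul_nonneg (by positivity) this

lemma eq_iff_ip_eq_of_isSymm {M N : Matrix (Fin n) (Fin n) ℝ} (hM : M.IsSymm)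
    (hN : N.IsSymm) : M = N ↔ ip M N = ip N N ∧ ip N N = ip M M := by
  refine ⟨by rintro rfl; exact ⟨rfl, rfl⟩, fun ⟨hMN, hNM⟩ => ?_⟩
  have hexpand : ip (M - N) (M - N) = ip M M - 2 * ip M N + ip N N := by
    simp only [ip, sub_mul, mul_sub, trace_sub, trace_mul_comm N M]
    ring
  rw [← sub_eq_zero, ← ip_self_eq_zero_iff (hM.sub hN)]
  linarith

end TraceInnerProduct

section DistanceMatrices

variable {n : ℕ} (G : SimpleGraph (Fin n))

lemma isSymm_distMatrix (i : ℕ) : (distMatrix G i).IsSymm :=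
  IsSymm.ext fun u v => by simp [distMatrix, SimpleGraph.dist_comm]

lemma distMatrix_ne_zero {i : ℕ} {u v : Fin n} (h : G.dist u v = i) : distMatrix G i ≠ 0 :=
  fun h0 => by simpa [distMatrix, h] using congrFun (congrFun h0 u) v

variable [DecidableRel G.Adj]

lemma ip_aeval_distMatrix_eq_zero_of_degree_lt {q : ℝ[X]} {i : ℕ} (h : q.degree < i) :
    ip (aeval (G.adjMatrix ℝ) q) (distMatrix G i) = 0 := by
  rw [ip_eq_sum_mul_apply _ (isSymm_distMatrix G i)]
  refine mul_eq_zero_of_right _ (sum_eq_zero fun u _ => sum_eq_zero fun v _ => ?_)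
  by_cases huv : G.dist u v = i
  · rw [G.aeval_adjMatrix_apply_eq_zero_of_degree_lt_dist (huv ▸ h), zero_mul]
  · simp [distMatrix, huv]

lemma ip_aeval_distMatrix_of_natDegree_eq {p : ℝ[X]} {i : ℕ} (hp : p.natDegree = i) :
    ip (aeval (G.adjMatrix ℝ) p) (distMatrix G i) =
      p.leadingCoeff * ip (G.adjMatrix ℝ ^ i) (distMatrix G i) := by
  rcases eq_or_ne p 0 with rfl | hp0
  · simp [ip]
  have hlow := ip_aeval_distMatrix_eq_zero_of_degree_lt G
    ((degree_eraseLead_lt hp0).trans_eq (hp ▸ degree_eq_natDegree hp0))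
  have hsplit : aeval (G.adjMatrix ℝ) p =
      aeval (G.adjMatrix ℝ) p.eraseLead + p.leadingCoeff • G.adjMatrix ℝ ^ i := by
    conv_lhs => rw [← p.eraseLead_add_C_mul_X_pow, hp]
    rw [map_add, map_mul, aeval_C, map_pow, aeval_X, Algebra.smul_def]
  simp only [ip, hsplit, add_mul, trace_add, smul_mul, trace_smul, smul_eq_mul] at hlow ⊢
  rw [mul_add, hlow]
  ring

end DistanceMatrices

theorem punctually_distance_regular_iff_avg_paths_general
    {n d i : ℕ} (G : SimpleGraph (Fin n)) [DecidableRel G.Adj]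
    (hconn : G.Connected)
    (hdiam : G.diam = d) (hi : i ≤ d)
    (lam0 : ℝ)
    (p : Polynomial ℝ) (hdeg : p.natDegree = i) (ω : ℝ) (hω : p.leadingCoeff = ω)
    (hpnorm : ip (Polynomial.aeval (G.adjMatrix ℝ) p) (Polynomial.aeval (G.adjMatrix ℝ) p)
      = p.eval lam0)
    (δbar abar : ℝ) (hδ : δbar = ip (distMatrix G i) (distMatrix G i))
    (habar : abar = ip ((G.adjMatrix ℝ) ^ i) (distMatrix G i) / δbar) :
    Polynomial.aeval (G.adjMatrix ℝ) p = distMatrix G i ↔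
      (ω * abar = 1 ∧ δbar = p.eval lam0) := by
  subst hω
  obtain ⟨u, v, huv⟩ := hconn.exists_dist_eq_of_le_diam (hdiam ▸ hi)
  have hδpos : 0 < δbar := hδ ▸ ip_self_pos (isSymm_distMatrix G _) (distMatrix_ne_zero G huv)
  have hωabar : p.leadingCoeff * abar = ip (aeval (G.adjMatrix ℝ) p) (distMatrix G i) / δbar := by
    rw [habar, ip_aeval_distMatrix_of_natDegree_eq G hdeg, mul_div_assoc]
  rw [hωabar, div_eq_one_iff_eq hδpos.ne', ← hpnorm, hδ]
  exact eq_iff_ip_eq_of_isSymm (G.isSymm_adjMatrix.aeval p) (isSymm_distMatrix G _)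

/-- `p_i(A) = A_i` iff `ω_i · ā_i^{(i)} = 1` and `δ̄_i = p_i(λ0)`, where
`ā_i^{(i)} = ⟨A^i, A_i⟩ / δ̄_i` is the average number of shortest `i`-paths between
vertices at distance `i`. -/
theorem punctually_distance_regular_iff_avg_paths
    {n d i : ℕ} (hn : 0 < n) (G : SimpleGraph (Fin n)) [DecidableRel G.Adj]
    (hconn : G.Connected) (δ : ℕ) (hreg : G.IsRegularOfDegree δ)
    (hdiam : G.diam = d) (hi : i ≤ d)
    (lam0 : ℝ) (hlam0 : lam0 = (δ : ℝ))
    (p : Polynomial ℝ) (hdeg : p.natDegree = i) (ω : ℝ) (hω : p.leadingCoeff = ω)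
    (hpnorm : ip (Polynomial.aeval (G.adjMatrix ℝ) p) (Polynomial.aeval (G.adjMatrix ℝ) p)
      = p.eval lam0)
    (horth : ∀ q : Polynomial ℝ, q.degree < i →
      ip (Polynomial.aeval (G.adjMatrix ℝ) q) (Polynomial.aeval (G.adjMatrix ℝ) p) = 0)
    (δbar abar : ℝ) (hδ : δbar = ip (distMatrix G i) (distMatrix G i))
    (habar : abar = ip ((G.adjMatrix ℝ) ^ i) (distMatrix G i) / δbar) :
    Polynomial.aeval (G.adjMatrix ℝ) p = distMatrix G i ↔
      (ω * abar = 1 ∧ δbar = p.eval lam0) :=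
  punctually_distance_regular_iff_avg_paths_general G hconn hdiam hi lam0 p hdeg ω hω hpnorm δbar
    abar hδ habar
end

section
/- A graph with D = d is i-punctually distance-regular (i.e., A_i E_j = p_{ji} E_j for constants p_{ji} and all j) if and only if 1/δ̄_i = Σ_{j=0}^{d} m̄_{ij}²/m̄_j. -/
open Matrix Polynomial Finset

section helpers
variable {N : ℕ}

lemma ip_comm (R S : Matrix (Fin N) (Fin N) ℝ) : ip R S = ip S R := by
  unfold ip; rw [Matrix.trace_mul_comm]

lemma ip_sum_left (s : Finset ℕ) (f : ℕ → Matrix (Fin N) (Fin N) ℝ)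
    (R : Matrix (Fin N) (Fin N) ℝ) :
    ip (∑ j ∈ s, f j) R = ∑ j ∈ s, ip (f j) R := by
  simp [ip, Finset.sum_mul, Finset.mul_sum]

lemma ip_sum_right (s : Finset ℕ) (f : ℕ → Matrix (Fin N) (Fin N) ℝ)
    (R : Matrix (Fin N) (Fin N) ℝ) :
    ip R (∑ j ∈ s, f j) = ∑ j ∈ s, ip R (f j) := by
  rw [ip_comm, ip_sum_left]; simp [ip_comm]

lemma ip_smul_left (a : ℝ) (R S : Matrix (Fin N) (Fin N) ℝ) :
    ip (a • R) S = a * ip R S := by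
  simp [ip, Matrix.smul_mul]; ring

lemma ip_smul_right (a : ℝ) (R S : Matrix (Fin N) (Fin N) ℝ) :
    ip R (a • S) = a * ip R S := by
  rw [ip_comm, ip_smul_left, ip_comm]

lemma ip_sub_left (R S T : Matrix (Fin N) (Fin N) ℝ) :
    ip (R - S) T = ip R T - ip S T := by
  simp [ip, Matrix.sub_mul]; ring

lemma ip_sub_right (R S T : Matrix (Fin N) (Fin N) ℝ) :
    ip R (S - T) = ip R S - ip R T := by
  simp [ip, Matrix.mul_sub]; ring

lemma ip_self_eq_zero (hN : 0 < N) {B : Matrix (Fin N) (Fin N) ℝ}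
    (hB : Bᵀ = B) (h : ip B B = 0) : B = 0 := by
  have hNne : (N : ℝ) ≠ 0 := Nat.cast_ne_zero.mpr hN.ne'
  have htr : (B * B).trace = ∑ u, ∑ v, (B u v)^2 := by
    simp only [Matrix.trace, Matrix.diag, Matrix.mul_apply]
    refine Finset.sum_congr rfl fun u _ => Finset.sum_congr rfl fun v _ => ?_
    have : B v u = B u v := by
      have := congrFun (congrFun hB u) v
      rwa [Matrix.transpose_apply] at this
    rw [this, sq]
  rw [ip, htr] at h
  have hsum : ∑ u, ∑ v, (B u v)^2 = 0 := by
    rcases mul_eq_zero.mp h with h' | h'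
    · exact absurd h' (by simpa using hNne)
    · exact h'
  ext u v
  have h1 := (Finset.sum_eq_zero_iff_of_nonneg (fun u _ =>
    Finset.sum_nonneg fun v _ => sq_nonneg _)).mp hsum u (Finset.mem_univ u)
  have h2 := (Finset.sum_eq_zero_iff_of_nonneg (fun v _ => sq_nonneg _)).mp h1 v
    (Finset.mem_univ v)
  simpa using pow_eq_zero_iff (n := 2) (by norm_num) |>.mp h2

end helpers

/-- A graph with `D = d` is `i`-punctually distance-regular (`A_i E_j = p_{ji} E_j` for
all `j`) iff `1/δ̄_i = Σ_j m̄_{ij}²/m̄_j`. -/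
theorem punctually_distance_regular_iff_excess
    {n d i : ℕ} (hn : 0 < n) (G : SimpleGraph (Fin n)) [DecidableRel G.Adj]
    (hconn : G.Connected) (δ : ℕ) (hreg : G.IsRegularOfDegree δ)
    (hdiam : G.diam = d) (hi : i ≤ d)
    (lam : ℕ → ℝ) (hlam : StrictAntiOn lam (Set.Iic d)) (hlam0 : lam 0 = (δ : ℝ))
    (m : ℕ → ℝ) (hm : ∀ j ≤ d, 0 < m j)
    (E : ℕ → Matrix (Fin n) (Fin n) ℝ)
    (hEsym : ∀ j ≤ d, (E j)ᵀ = E j)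
    (hEmul : ∀ j ≤ d, ∀ k ≤ d, E j * E k = if j = k then E j else 0)
    (hEsum : ∑ j ∈ Finset.range (d + 1), E j = 1)
    (hAE : G.adjMatrix ℝ = ∑ j ∈ Finset.range (d + 1), lam j • E j)
    (htr : ∀ j ≤ d, (E j).trace = m j) :
    (∃ c : ℕ → ℝ, ∀ j ≤ d, distMatrix G i * E j = c j • E j) ↔
      1 / ip (distMatrix G i) (distMatrix G i)
        = ∑ j ∈ Finset.range (d + 1), (mbar G (E j) i) ^ 2 / (m j / n) := by
  have hnR : (n : ℝ) ≠ 0 := Nat.cast_ne_zero.mpr hn.ne'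
  set A := distMatrix G i with hAdef
  have hAsym : Aᵀ = A := by
    ext u v
    simp [hAdef, distMatrix, Matrix.transpose_apply, SimpleGraph.dist_comm]
  set dl := ip A A with hdl
  have hle : ∀ j ∈ Finset.range (d + 1), j ≤ d := fun j hj =>
    Nat.lt_succ_iff.mp (Finset.mem_range.mp hj)
  have hmn : ∀ j ∈ Finset.range (d + 1), m j / n ≠ 0 := fun j hj =>
    ne_of_gt (div_pos (hm j (hle j hj)) (Nat.cast_pos.mpr hn))
  have ipEE : ∀ j ∈ Finset.range (d + 1), ∀ k ∈ Finset.range (d + 1),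
      ip (E j) (E k) = if j = k then m j / n else 0 := by
    intro j hj k hk
    rw [ip, hEmul j (hle j hj) k (hle k hk)]
    by_cases hjk : j = k
    · rw [if_pos hjk, if_pos hjk, htr j (hle j hj)]; ring
    · rw [if_neg hjk, if_neg hjk]; simp
  have hipC : ∀ (c : ℕ → ℝ) (R : Matrix (Fin n) (Fin n) ℝ),
      ip (∑ j ∈ Finset.range (d + 1), c j • E j) R
        = ∑ j ∈ Finset.range (d + 1), c j * ip (E j) R := by
    intro c R
    rw [ip_sum_left]
    exact Finset.sum_congr rfl fun j _ => ip_smul_left (c j) (E j) R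
  have hipEC : ∀ (c : ℕ → ℝ), ∀ j ∈ Finset.range (d + 1),
      ip (E j) (∑ k ∈ Finset.range (d + 1), c k • E k) = c j * (m j / n) := by
    intro c j hj
    rw [ip_sum_right]
    have hterm : ∀ k ∈ Finset.range (d + 1), ip (E j) (c k • E k)
        = if j = k then c k * (m j / n) else 0 := by
      intro k hk
      rw [ip_smul_right, ipEE j hj k hk]
      split <;> simp
    rw [Finset.sum_congr rfl hterm, Finset.sum_ite_eq]
    simp [hj]
  constructor
  · rintro ⟨c, hc⟩
    have hA : A = ∑ j ∈ Finset.range (d + 1), c j • E j := by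
      calc A = A * ∑ j ∈ Finset.range (d + 1), E j := by rw [hEsum, mul_one]
        _ = ∑ j ∈ Finset.range (d + 1), A * E j := Finset.mul_sum _ _ _
        _ = _ := Finset.sum_congr rfl fun j hj => hc j (hle j hj)
    have hdlval : dl = ∑ j ∈ Finset.range (d + 1), c j ^ 2 * (m j / n) := by
      rw [hdl, hA, hipC]
      refine Finset.sum_congr rfl fun j hj => ?_
      rw [hipEC c j hj]; ring
    have hmbar : ∀ j ∈ Finset.range (d + 1),
        mbar G (E j) i = c j * (m j / n) / dl := by
      intro j hj
      unfold mbar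
      rw [← hAdef, ← hdl]
      congr 1
      rw [hA]; exact hipEC c j hj
    have hterm : ∀ j ∈ Finset.range (d + 1),
        (mbar G (E j) i) ^ 2 / (m j / n) = c j ^ 2 * (m j / n) / dl ^ 2 := by
      intro j hj
      rw [hmbar j hj, div_pow, mul_pow, div_right_comm, pow_two (m j / (n:ℝ)),
        ← mul_assoc, mul_div_cancel_right₀ _ (hmn j hj)]
    rw [Finset.sum_congr rfl hterm, ← Finset.sum_div, ← hdlval]
    rcases eq_or_ne dl 0 with h0 | h0
    · simp [h0]
    · field_simp
  · intro heq
    by_cases hdl0 : dl = 0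
    · have hA0 : A = 0 := ip_self_eq_zero hn hAsym (hdl ▸ hdl0)
      exact ⟨fun _ => 0, fun j hj => by rw [hA0]; simp⟩
    · set c : ℕ → ℝ := fun j => ip (E j) A / (m j / n) with hcdef
      have hcj : ∀ j, c j = ip (E j) A / (m j / n) := fun j => rfl
      have hS : ∑ j ∈ Finset.range (d + 1), (ip (E j) A) ^ 2 / (m j / n) = dl := by
        have h1 : 1 / dl
            = (∑ j ∈ Finset.range (d + 1), (ip (E j) A) ^ 2 / (m j / n)) / dl ^ 2 := by
          rw [heq, Finset.sum_div]
          refine Finset.sum_congr rfl fun j hj => ?_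
          unfold mbar
          rw [← hAdef, ← hdl, div_pow, div_div, div_div, mul_comm (dl ^ 2) (m j / n)]
        have h2 := h1.symm
        rw [div_eq_div_iff (pow_ne_zero 2 hdl0) hdl0] at h2
        have h3 : (∑ j ∈ Finset.range (d + 1), (ip (E j) A) ^ 2 / (m j / n)) * dl
            = dl * dl := by rw [h2]; ring
        exact mul_right_cancel₀ hdl0 h3
      set Cm := ∑ j ∈ Finset.range (d + 1), c j • E j with hCm
      have hEC : ∀ j ∈ Finset.range (d + 1), ip (E j) Cm = ip (E j) A := by
        intro j hj
        rw [hCm, hipEC c j hj, hcj]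
        exact div_mul_cancel₀ _ (hmn j hj)
      have hCA : ip Cm A = dl := by
        rw [hCm, hipC, ← hS]
        refine Finset.sum_congr rfl fun j hj => ?_
        rw [hcj, div_mul_eq_mul_div, ← sq]
      have hCC : ip Cm Cm = dl := by
        rw [hCm, hipC, ← hS]
        refine Finset.sum_congr rfl fun j hj => ?_
        rw [hipEC c j hj, hcj, div_mul_cancel₀ _ (hmn j hj), div_mul_eq_mul_div, ← sq]
      have hCsym : Cmᵀ = Cm := by
        rw [hCm, Matrix.transpose_sum]
        refine Finset.sum_congr rfl fun j hj => ?_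
        rw [Matrix.transpose_smul, hEsym j (hle j hj)]
      have hB0 : A - Cm = 0 := by
        apply ip_self_eq_zero hn
        · rw [Matrix.transpose_sub, hAsym, hCsym]
        · rw [ip_sub_left, ip_sub_right, ip_sub_right, hCA, hCC, ← hdl,
            ip_comm A Cm, hCA]
          ring
      have hACm : A = Cm := sub_eq_zero.mp hB0
      refine ⟨c, fun k hk => ?_⟩
      have hkmem : k ∈ Finset.range (d + 1) := Finset.mem_range.mpr (Nat.lt_succ_iff.mpr hk)
      rw [hACm, hCm, Finset.sum_mul]
      have hterm : ∀ j ∈ Finset.range (d + 1),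
          (c j • E j) * E k = if j = k then c j • E j else 0 := by
        intro j hj
        rw [Matrix.smul_mul, hEmul j (hle j hj) k hk]
        split <;> rename_i h
        · rw [h]
        · simp
      rw [Finset.sum_congr rfl hterm, Finset.sum_ite_eq']
      simp [hkmem]
end
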